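/- Let X = ℝ ⊕_∞ ℓ² and E = {((n/(n+1)), (n/(n+1))·eₙ) : n ∈ ℕ} as above. Then (1, 0) belongs to the norm-closed convex hull of E. -/

import Mathlib

/-!
The points `(n/(n+1), n/(n+1) • eₙ)` of `E` converge weakly to `(1, 0)`: the first coordinates
tend to `1`, and `eₙ → 0` weakly by Bessel's inequality. Hence `(1, 0)` lies in the weak closure
of the convex hull of `E`, which by Mazur's theorem is its norm closure.
-/

noncomputable section

/-- The set `E = {((n/(n+1)), (n/(n+1))·eₙ) : n ∈ ℕ}` in `ℝ ⊕_∞ ℓ²` (the product carries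
the max norm), where `eₙ` is the canonical basis of `ℓ²`. -/
def stmt7E : Set (ℝ × lp (fun _ : ℕ => ℝ) 2) :=
  Set.range fun n : ℕ =>
    (((n : ℝ) / (n + 1)), ((n : ℝ) / (n + 1)) • lp.single 2 n (1 : ℝ))

open Filter Topology

theorem tendsto_toWeakSpace_of_forall_tendsto_apply {𝕜 E α : Type*} [RCLike 𝕜] [AddCommGroup E]
    [Module 𝕜 E] [TopologicalSpace E] {l : Filter α} {u : α → E} {x : E}
    (h : ∀ f : StrongDual 𝕜 E, Tendsto (fun i => f (u i)) l (𝓝 (f x))) :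
    Tendsto (fun i => toWeakSpace 𝕜 E (u i)) l (𝓝 (toWeakSpace 𝕜 E x)) :=
  (IsInducing.induced _).tendsto_nhds_iff.2 (tendsto_pi_nhds.2 h)

theorem Orthonormal.tendsto_toWeakSpace_zero {𝕜 E : Type*} [RCLike 𝕜] [NormedAddCommGroup E]
    [InnerProductSpace 𝕜 E] [CompleteSpace E] {v : ℕ → E} (hv : Orthonormal 𝕜 v) :
    Tendsto (fun n => toWeakSpace 𝕜 E (v n)) atTop (𝓝 0) := by
  rw [← map_zero (toWeakSpace 𝕜 E)]
  refine tendsto_toWeakSpace_of_forall_tendsto_apply fun f => ?_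
  -- Riesz: `f = ⟪w, ·⟫`, and Bessel's inequality makes `∑ ‖⟪v n, w⟫‖²` finite.
  set w := (InnerProductSpace.toDual 𝕜 E).symm f
  have hsq := (hv.inner_products_summable w).tendsto_atTop_zero.sqrt
  simp only [Real.sqrt_sq (norm_nonneg _), Real.sqrt_zero] at hsq
  rw [map_zero, tendsto_zero_iff_norm_tendsto_zero]
  simpa only [← InnerProductSpace.toDual_symm_apply, norm_inner_symm] using hsq

theorem lp.orthonormal_single {𝕜 ι : Type*} [RCLike 𝕜] [DecidableEq ι] :
    Orthonormal 𝕜 fun i : ι => lp.single 2 i (1 : 𝕜) := by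
  rw [orthonormal_iff_ite]
  intro i j
  rw [lp.inner_single_left, lp.single_apply]
  split_ifs with h
  · subst h; simp
  · simp [Ne.symm h]

theorem tendsto_toWeakSpace_prod_smul {F α : Type*} [AddCommGroup F] [Module ℝ F]
    [TopologicalSpace F] {l : Filter α} {c : α → ℝ} {t : ℝ} {u : α → F}
    (hc : Tendsto c l (𝓝 t)) (hu : Tendsto (fun i => toWeakSpace ℝ F (u i)) l (𝓝 0)) :
    Tendsto (fun i => toWeakSpace ℝ (ℝ × F) (c i, c i • u i)) l
      (𝓝 (toWeakSpace ℝ (ℝ × F) (t, 0))) := by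
  set inr := WeakSpace.map (ContinuousLinearMap.inr ℝ ℝ F)
  have hsplit : ∀ i, toWeakSpace ℝ (ℝ × F) (c i, c i • u i) =
      c i • (toWeakSpace ℝ (ℝ × F) (1, 0) + inr (toWeakSpace ℝ F (u i))) := fun i => by
    rw [show (c i, c i • u i) = c i • (((1 : ℝ), (0 : F)) + (0, u i)) by ext <;> simp,
      map_smul, map_add]
    rfl
  have hlim := hc.smul (tendsto_const_nhds (x := toWeakSpace ℝ (ℝ × F) (1, 0)) |>.add
    ((inr.continuous.tendsto 0).comp hu))
  simpa only [hsplit, Function.comp_def, map_zero, add_zero, ← map_smul, Prod.smul_mk, smul_eq_mul,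
    mul_one, smul_zero] using hlim

theorem mem_closure_convexHull_of_tendsto_toWeakSpace {E ι : Type*} [AddCommGroup E]
    [Module ℝ E] [TopologicalSpace E] [IsTopologicalAddGroup E] [ContinuousSMul ℝ E]
    [LocallyConvexSpace ℝ E] {l : Filter ι} [l.NeBot] {s : Set E} {u : ι → E} {x : E}
    (hu : ∀ i, u i ∈ s) (h : Tendsto (fun i => toWeakSpace ℝ E (u i)) l (𝓝 (toWeakSpace ℝ E x))) :
    x ∈ closure (convexHull ℝ s) := by
  have hx : toWeakSpace ℝ E x ∈ toWeakSpace ℝ E '' closure (convexHull ℝ s) := by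
    rw [(convex_convexHull ℝ s).toWeakSpace_closure ℝ]
    exact mem_closure_of_tendsto h <| Eventually.of_forall fun i =>
      Set.mem_image_of_mem _ (subset_convexHull ℝ s (hu i))
  exact (toWeakSpace ℝ E).injective.mem_set_image.1 hx

/-- The point `(1, 0)` belongs to the norm-closed convex hull of `E` in
`ℝ ⊕_∞ ℓ²`. -/
theorem stmt7 :
    ((1 : ℝ), (0 : lp (fun _ : ℕ => ℝ) 2)) ∈ closure (convexHull ℝ stmt7E) :=
  mem_closure_convexHull_of_tendsto_toWeakSpace (fun n => ⟨n, rfl⟩) <|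
    tendsto_toWeakSpace_prod_smul (tendsto_natCast_div_add_atTop 1)
      lp.orthonormal_single.tendsto_toWeakSpace_zero
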